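/- arXiv:math/9905119 — 3 statements merged into one kernel-verified Lean document; each statement's English description precedes it below -/
import Mathlib

section
/- Let F be a non-principal filter on ℕ and let g : ℕ → ℕ eventually dominate the increasing enumeration function of every member of F. Then F is meager as a subset of Cantor space. -/
open Filter Set

/-- A strategy: maps finite sequences of the opponent's moves to a natural number. -/
abbrev Strat := List ℕ → ℕ

/-- TWO's move in inning `k` (0-indexed) when following strategy `σ` against ONE's
moves `m`: TWO has seen `m 0, …, m k`. -/
def twoFollow (σ : Strat) (m : ℕ → ℕ) (k : ℕ) : ℕ :=
  σ (List.ofFn fun i : Fin (k + 1) => m i)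

/-- ONE's move in inning `k` when following strategy `σ` against TWO's moves `n`:
ONE's move depends on `n 0, …, n (k-1)` (the first move is `σ []`). -/
def oneFollow (σ : Strat) (n : ℕ → ℕ) (k : ℕ) : ℕ :=
  σ (List.ofFn fun i : Fin k => n i)

/-- TWO wins the play `(m 0, n 0, m 1, n 1, …)` of the game `G1(F)`. -/
def TwoWins1 (F : Set (Set ℕ)) (m n : ℕ → ℕ) : Prop :=
  StrictMono n ∧ (∀ N : ℕ, ∃ k, N ≤ k ∧ m k < n k) ∧ Set.range n ∈ F

/-- TWO wins the play `(m 0, n 0, m 1, n 1, …)` of the game `G2(F)`. -/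
def TwoWins2 (F : Set (Set ℕ)) (m n : ℕ → ℕ) : Prop :=
  (∀ᶠ k in Filter.atTop, m k < n k) ∧ Set.range n ∈ F

/-- `σ` is a winning strategy for TWO in `G1(F)`. -/
def TwoWinning1 (F : Set (Set ℕ)) (σ : Strat) : Prop :=
  ∀ m : ℕ → ℕ, TwoWins1 F m (twoFollow σ m)

/-- `σ` is a winning strategy for ONE in `G1(F)`. -/
def OneWinning1 (F : Set (Set ℕ)) (σ : Strat) : Prop :=
  ∀ n : ℕ → ℕ, ¬ TwoWins1 F (oneFollow σ n) n

/-- `σ` is a winning strategy for TWO in `G2(F)`. -/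
def TwoWinning2 (F : Set (Set ℕ)) (σ : Strat) : Prop :=
  ∀ m : ℕ → ℕ, TwoWins2 F m (twoFollow σ m)

/-- `σ` is a winning strategy for ONE in `G2(F)`. -/
def OneWinning2 (F : Set (Set ℕ)) (σ : Strat) : Prop :=
  ∀ n : ℕ → ℕ, ¬ TwoWins2 F (oneFollow σ n) n

/-- `F` is a non-principal filter on `ℕ`: upward closed, closed under finite
intersections, and every member is infinite. -/
def IsNPFilter (F : Set (Set ℕ)) : Prop :=
  (∀ X ∈ F, ∀ Y : Set ℕ, X ⊆ Y → Y ∈ F) ∧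
  (∀ X ∈ F, ∀ Y ∈ F, X ∩ Y ∈ F) ∧
  (∀ X ∈ F, X.Infinite)

/-- `F` is a rare filter: every partition of `ℕ` into disjoint (nonempty) finite sets
admits a selector in `F`. -/
def IsRare (F : Set (Set ℕ)) : Prop :=
  ∀ I : ℕ → Set ℕ, (∀ n, (I n).Finite) → (∀ n, (I n).Nonempty) →
    (Pairwise fun i j => Disjoint (I i) (I j)) → (⋃ n, I n) = Set.univ →
    ∃ X ∈ F, ∀ n, (X ∩ I n).Subsingleton

/-- The subset of Cantor space `2^ℕ` corresponding to the filter `F`. -/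
def cantorCoded (F : Set (Set ℕ)) : Set (ℕ → Bool) :=
  {χ | {n | χ n = true} ∈ F}

/-- The increasing enumeration of `X ⊆ ℕ`. -/
noncomputable def enum (X : Set ℕ) : ℕ → ℕ := Nat.nth (· ∈ X)

/-- `g` eventually dominates `f`. -/
def EvDom (g f : ℕ → ℕ) : Prop := ∀ᶠ k in Filter.atTop, f k < g k

/-!
Split `ℕ` into consecutive blocks `[a j, a (j + 1))` so long that `g k < a (j + 1)` whenever
`k ≤ a j`. If `enum X` is dominated by `g` from `K` on and `a j > enum X K`, then the first
element of `X` above `a j` has index `k` with `K < k ≤ a j`, so it is below `g k < a (j + 1)`: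
every member of `F` meets all but finitely many blocks. The sets of sequences that meet every
block from the `N`-th on are closed and contain no eventually-false sequence, hence are nowhere
dense, and `F` lies in their countable union.
-/

section CantorSpace

lemma interior_eq_empty_of_forall_frequently_true {s : Set (ℕ → Bool)}
    (hs : ∀ χ ∈ s, ∃ᶠ i in atTop, χ i = true) : interior s = ∅ := by
  refine eq_empty_iff_forall_notMem.2 fun χ hχ => ?_
  obtain ⟨I, u, hu, hIu⟩ := isOpen_pi_iff.1 isOpen_interior χ hχ
  set M := I.sup id + 1
  have hI : ∀ i ∈ I, i < M := fun i hi => Nat.lt_succ_of_le (Finset.le_sup (f := id) hi)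
  let χ' : ℕ → Bool := fun i => if i < M then χ i else false
  have hχ' : χ' ∈ s := interior_subset <| hIu fun i hi => by
    simpa only [χ', if_pos (hI i hi)] using (hu i hi).2
  obtain ⟨i, hiM, hi⟩ := frequently_atTop.1 (hs χ' hχ') M
  simp [χ', Nat.not_lt.2 hiM] at hi

def meetsBlocksFrom (a : ℕ → ℕ) (N : ℕ) : Set (ℕ → Bool) :=
  {χ | ∀ j ≥ N, ∃ i ∈ Ico (a j) (a (j + 1)), χ i = true}

lemma isClosed_meetsBlocksFrom (a : ℕ → ℕ) (N : ℕ) : IsClosed (meetsBlocksFrom a N) := by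
  have hclosed (i : ℕ) : IsClosed {χ : ℕ → Bool | χ i = true} :=
    isClosed_eq (continuous_apply i) continuous_const
  have : meetsBlocksFrom a N =
      ⋂ j ≥ N, ⋃ i ∈ Ico (a j) (a (j + 1)), {χ : ℕ → Bool | χ i = true} := by
    ext χ; simp [meetsBlocksFrom]
  rw [this]
  exact isClosed_biInter fun j _ => (finite_Ico _ _).isClosed_biUnion fun i _ => hclosed i

variable {a : ℕ → ℕ}

lemma frequently_true_of_mem_meetsBlocksFrom (ha : StrictMono a) {N : ℕ} {χ : ℕ → Bool}
    (hχ : χ ∈ meetsBlocksFrom a N) : ∃ᶠ i in atTop, χ i = true := by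
  refine frequently_atTop.2 fun M => ?_
  obtain ⟨i, hi, hχi⟩ := hχ (max N M) (le_max_left _ _)
  exact ⟨i, (le_max_right N M).trans (ha.le_apply.trans hi.1), hχi⟩

lemma isNowhereDense_meetsBlocksFrom (ha : StrictMono a) (N : ℕ) :
    IsNowhereDense (meetsBlocksFrom a N) :=
  (isClosed_meetsBlocksFrom a N).isNowhereDense_iff.2 <|
    interior_eq_empty_of_forall_frequently_true fun _ =>
      frequently_true_of_mem_meetsBlocksFrom ha

lemma isMeagre_iUnion_meetsBlocksFrom (ha : StrictMono a) :
    IsMeagre (⋃ N, meetsBlocksFrom a N) :=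
  isMeagre_iUnion fun N => (isNowhereDense_meetsBlocksFrom ha N).isMeagre

end CantorSpace

section Blocks

variable (g : ℕ → ℕ)

def blockEnd : ℕ → ℕ
  | 0 => 0
  | j + 1 => (Finset.range (blockEnd j + 1)).sup g + blockEnd j + 1

lemma blockEnd_strictMono : StrictMono (blockEnd g) :=
  strictMono_nat_of_lt_succ fun j => by
    show blockEnd g j < _ + blockEnd g j + 1
    omega

variable {g}

lemma lt_blockEnd_succ {k j : ℕ} (hk : k ≤ blockEnd g j) : g k < blockEnd g (j + 1) := by
  have : g k ≤ (Finset.range (blockEnd g j + 1)).sup g :=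
    Finset.le_sup (Finset.mem_range.2 (Nat.lt_succ_of_le hk))
  show g k < _ + blockEnd g j + 1
  omega

lemma exists_mem_Ico_blockEnd {X : Set ℕ} (hX : X.Infinite) {K : ℕ}
    (hK : ∀ k ≥ K, enum X k < g k) {j : ℕ} (hj : enum X K < blockEnd g j) :
    ∃ i ∈ Ico (blockEnd g j) (blockEnd g (j + 1)), i ∈ X := by
  classical
  -- `enum X k` is the least element of `X` that is `≥ blockEnd g j`
  set k := Nat.count (· ∈ X) (blockEnd g j)
  have hKk : K < k := (Nat.lt_nth_iff_count_lt (p := (· ∈ X)) hX).2 hj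
  exact ⟨enum X k, ⟨Nat.le_nth_count (p := (· ∈ X)) hX _,
    (hK k hKk.le).trans (lt_blockEnd_succ (Nat.count_le _))⟩, Nat.nth_mem_of_infinite hX k⟩

lemma eventually_exists_mem_Ico_blockEnd {X : Set ℕ} (hX : X.Infinite)
    (hg : EvDom g (enum X)) :
    ∀ᶠ j in atTop, ∃ i ∈ Ico (blockEnd g j) (blockEnd g (j + 1)), i ∈ X := by
  obtain ⟨K, hK⟩ := eventually_atTop.1 hg
  refine eventually_atTop.2 ⟨enum X K + 1, fun j hj => exists_mem_Ico_blockEnd hX hK ?_⟩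
  exact Nat.lt_of_succ_le (hj.trans (blockEnd_strictMono g).le_apply)

end Blocks

/-- If `g` eventually dominates the enumeration function of every member of `F`,
then `F` is meager. -/
theorem stmt11 (F : Set (Set ℕ)) (hF : IsNPFilter F) (g : ℕ → ℕ)
    (hg : ∀ X ∈ F, EvDom g (enum X)) : IsMeagre (cantorCoded F) := by
  refine (isMeagre_iUnion_meetsBlocksFrom (blockEnd_strictMono g)).mono fun χ hχ => ?_
  obtain ⟨N, hN⟩ :=
    eventually_atTop.1 (eventually_exists_mem_Ico_blockEnd (hF.2.2 _ hχ) (hg _ hχ))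
  exact mem_iUnion.2 ⟨N, hN⟩
end

section
/- Let F be a non-principal filter on ℕ such that for every partition of ℕ into disjoint finite sets there is a member of F disjoint from infinitely many blocks of the partition. Then the set of enumeration functions of members of F is unbounded with respect to eventual domination. -/
/-!
Cut `ℕ` into blocks `[aₙ, aₙ₊₁)` with `g aₙ < aₙ₊₁`. If `X ∈ F` misses the block
`[aₙ, aₙ₊₁)`, then the `aₙ`-th element of `X`, being at least `aₙ`, is at least `aₙ₊₁ > g aₙ`.
Since some `X ∈ F` misses infinitely many blocks, `g` does not eventually dominate its
enumeration.
-/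

open Filter Set

def blockEnds (g : ℕ → ℕ) : ℕ → ℕ
  | 0 => 0
  | n + 1 => blockEnds g n + g (blockEnds g n) + 1

lemma blockEnds_succ (g : ℕ → ℕ) (n : ℕ) :
    blockEnds g (n + 1) = blockEnds g n + g (blockEnds g n) + 1 := rfl

lemma lt_blockEnds_succ (g : ℕ → ℕ) (n : ℕ) : g (blockEnds g n) < blockEnds g (n + 1) := by
  rw [blockEnds_succ]; omega

lemma strictMono_blockEnds (g : ℕ → ℕ) : StrictMono (blockEnds g) :=
  strictMono_nat_of_lt_succ fun n => by rw [blockEnds_succ]; omega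

lemma iUnion_Ico_eq_univ_of_strictMono {a : ℕ → ℕ} (ha : StrictMono a) (h0 : a 0 = 0) :
    ⋃ n, Ico (a n) (a (n + 1)) = univ := by
  have := iUnion_Ico_map_succ_eq_Ici (f := a) (fun n => ha.monotone (Nat.zero_le n))
    (not_bddAbove_iff.2 fun b =>
      ⟨a (b + 1), mem_range_self _, (ha.id_le _).trans_lt' b.lt_succ_self⟩)
  simpa [h0] using this

lemma le_enum_of_inter_Ico_eq_empty {X : Set ℕ} (hX : X.Infinite) {m M : ℕ}
    (h : X ∩ Ico m M = ∅) : M ≤ enum X m := by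
  by_contra! hlt
  have hmem : enum X m ∈ X ∩ Ico m M :=
    ⟨Nat.nth_mem_of_infinite hX m, (Nat.nth_strictMono hX).id_le m, hlt⟩
  simp [h] at hmem

/-- If for every partition of `ℕ` into disjoint finite sets some member of `F` is
disjoint from infinitely many blocks, then the enumeration functions of members of
`F` are unbounded under eventual domination. -/
theorem stmt13 (F : Set (Set ℕ)) (hF : IsNPFilter F)
    (h : ∀ I : ℕ → Set ℕ, (∀ n, (I n).Finite) → (∀ n, (I n).Nonempty) →
      (Pairwise fun i j => Disjoint (I i) (I j)) → (⋃ n, I n) = Set.univ →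
      ∃ X ∈ F, {n : ℕ | X ∩ I n = ∅}.Infinite) :
    ∀ g : ℕ → ℕ, ∃ X ∈ F, ¬ EvDom g (enum X) := by
  intro g
  set a := blockEnds g
  have ha : StrictMono a := strictMono_blockEnds g
  obtain ⟨X, hXF, hmiss⟩ := h (fun n => Ico (a n) (a (n + 1))) (fun _ => finite_Ico _ _)
    (fun n => nonempty_Ico.2 (ha n.lt_succ_self))
    (by simpa only [Order.succ_eq_add_one] using ha.monotone.pairwise_disjoint_on_Ico_succ)
    (iUnion_Ico_eq_univ_of_strictMono ha rfl)
  refine ⟨X, hXF, fun hdom => ?_⟩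
  obtain ⟨N, hN⟩ := eventually_atTop.1 hdom
  obtain ⟨n, hn, hNn⟩ := hmiss.exists_gt N
  have hdom_n := hN (a n) (hNn.le.trans (ha.id_le n))
  have hmiss_n := le_enum_of_inter_Ico_eq_empty (hF.2.2 X hXF) hn
  have hblock : g (a n) < a (n + 1) := lt_blockEnds_succ g n
  omega
end

section
/- Let F be a rare non-principal filter on ℕ and let X = {x_1 < x_2 < ...} ∈ F. Then there is an infinite subset Y ⊆ X such that X \ Y ∈ F. -/
open Filter Set

/-! Cut `ℕ` into finite intervals each containing two consecutive points of `X`. A selector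
`S ∈ F` for this partition misses at least one point of every such pair, so `X \ S` is infinite,
while `X \ (X \ S) = X ∩ S ∈ F`. -/

lemma Set.Infinite.strictMono_enum {X : Set ℕ} (hX : X.Infinite) : StrictMono (enum X) :=
  Nat.nth_strictMono hX

lemma Set.Infinite.enum_mem {X : Set ℕ} (hX : X.Infinite) (n : ℕ) : enum X n ∈ X :=
  Nat.nth_mem_of_infinite hX n

lemma IsRare.exists_subsingleton_inter_Ico {F : Set (Set ℕ)} (hF : IsRare F) {c : ℕ → ℕ}
    (hc : StrictMono c) : ∃ S ∈ F, ∀ n, (S ∩ Ico (c n) (c (n + 1))).Subsingleton := by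
  -- Lowering the first endpoint to `0` makes the intervals cover `ℕ`.
  set c₀ := Function.update c 0 0
  have hc₀_succ : ∀ n, c₀ (n + 1) = c (n + 1) := fun n => Function.update_of_ne n.succ_ne_zero _ _
  have hc₀_le : ∀ n, c₀ n ≤ c n := by
    rintro (_ | n)
    · exact Nat.zero_le _
    · exact (hc₀_succ n).le
  have hc₀ : StrictMono c₀ := strictMono_nat_of_lt_succ fun n => by
    rw [hc₀_succ]
    exact (hc₀_le n).trans_lt (hc n.lt_succ_self)
  have hcover : ⋃ n, Ico (c₀ n) (c₀ (n + 1)) = univ := by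
    simpa [c₀] using
      iUnion_Ico_map_succ_eq_Ici (fun n => hc₀.monotone (Nat.zero_le n))
        hc₀.not_bddAbove_range_of_wellFoundedLT
  obtain ⟨S, hSF, hS⟩ := hF (fun n => Ico (c₀ n) (c₀ (n + 1))) (fun _ => finite_Ico _ _)
    (fun n => nonempty_Ico.2 (hc₀ n.lt_succ_self)) hc₀.monotone.pairwise_disjoint_on_Ico_succ
    hcover
  refine ⟨S, hSF, fun n => (hS n).anti (inter_subset_inter_right _ ?_)⟩
  rw [hc₀_succ]
  exact Ico_subset_Ico_left (hc₀_le n)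

lemma Set.Infinite.infinite_diff_of_subsingleton_inter_Ico {X S : Set ℕ} (hX : X.Infinite)
    (hS : ∀ n, (S ∩ Ico (enum X (2 * n)) (enum X (2 * (n + 1)))).Subsingleton) :
    (X \ S).Infinite := by
  have he := hX.strictMono_enum
  refine infinite_of_forall_exists_gt fun a => ?_
  -- The block `a + 1` holds the two points `enum X i` and `enum X (i + 1)`, both above `a`.
  set i := 2 * (a + 1)
  have hgt : a < enum X i := (by omega : a < i).trans_le he.le_apply
  by_cases hi : enum X i ∈ S
  · have h₀ : enum X i ∈ Ico (enum X i) (enum X (2 * (a + 1 + 1))) := ⟨le_rfl, he (by omega)⟩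
    have h₁ : enum X (i + 1) ∈ Ico (enum X i) (enum X (2 * (a + 1 + 1))) :=
      ⟨(he i.lt_succ_self).le, he (by omega)⟩
    refine ⟨enum X (i + 1), ⟨hX.enum_mem _, fun hi₁ => ?_⟩, hgt.trans (he i.lt_succ_self)⟩
    exact (he i.lt_succ_self).ne (hS (a + 1) ⟨hi, h₀⟩ ⟨hi₁, h₁⟩)
  · exact ⟨enum X i, ⟨hX.enum_mem _, hi⟩, hgt⟩

/-- If `F` is rare and `X ∈ F`, there is an infinite `Y ⊆ X` with `X \ Y ∈ F`. -/
theorem stmt16 (F : Set (Set ℕ)) (hF : IsNPFilter F) (h : IsRare F)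
    (X : Set ℕ) (hX : X ∈ F) :
    ∃ Y ⊆ X, Y.Infinite ∧ X \ Y ∈ F := by
  obtain ⟨-, hinter, hinfinite⟩ := hF
  have hXinf := hinfinite X hX
  obtain ⟨S, hSF, hS⟩ := h.exists_subsingleton_inter_Ico
    (hXinf.strictMono_enum.comp (strictMono_mul_left_of_pos two_pos))
  refine ⟨X \ S, sdiff_subset, hXinf.infinite_diff_of_subsingleton_inter_Ico hS, ?_⟩
  rw [sdiff_sdiff_right_self]
  exact hinter X hX S hSF
end
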